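/- arXiv:0902.2102 — 2 statements merged into one kernel-verified Lean document; each statement's English description precedes it below -/
import Mathlib

section
/- (Jensen's inequality on the range of P.) Let f : ℝ^n → ℝ be separately convex and let v = (v_1,…,v_n) ∈ L^p(ℝ^n, ℝ^n) be such that each v_j is a finite linear combination of Haar functions h_Q^{(ε)}. Then f( ∫_{[0,1]^n} P(v)(x) dx ) ≤ ∫_{[0,1]^n} f(P(v)(x)) dx, where P(v) = (P^{(e_1)}(v_1), …, P^{(e_n)}(v_n)). -/
open MeasureTheory Filter
open scoped ENNReal Topology

noncomputable section

/-- The Haar function on `[0,1)`. -/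
def haar0 (x : ℝ) : ℝ :=
  Set.indicator (Set.Ico (0:ℝ) (1/2)) (fun _ => (1:ℝ)) x
    - Set.indicator (Set.Ico (1/2:ℝ) 1) (fun _ => (1:ℝ)) x

/-- A dyadic cube in `ℝ^n`, recorded by the exponent `k` of its side length `2^k`
and the position `pos`; the cube is `∏_t [pos t · 2^k, (pos t + 1) · 2^k)`. -/
abbrev DyadicCube (n : ℕ) := ℤ × (Fin n → ℤ)

/-- The (L∞-normalized) Haar function on the dyadic interval `[i·2^k, (i+1)·2^k)`. -/
def haarInt (k i : ℤ) (x : ℝ) : ℝ := haar0 ((x - (i : ℝ) * 2 ^ k) / 2 ^ k)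

/-- The indicator of the dyadic interval `[i·2^k, (i+1)·2^k)`. -/
def indInt (k i : ℤ) (x : ℝ) : ℝ :=
  Set.indicator (Set.Ico ((i:ℝ) * 2 ^ k) (((i:ℝ)+1) * 2 ^ k)) (fun _ => (1:ℝ)) x

/-- The Haar function `h_Q^{(ε)}` on a dyadic cube `Q` with direction `ε ∈ {0,1}^n`:
the factor in coordinate `t` is `h_{I_t}` if `ε t` and `1_{I_t}` otherwise. -/
def haarCube (n : ℕ) (ε : Fin n → Bool) (Q : DyadicCube n) (x : Fin n → ℝ) : ℝ :=
  ∏ t, (if ε t then haarInt Q.1 (Q.2 t) (x t) else indInt Q.1 (Q.2 t) (x t))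

/-- The volume `|Q| = 2^{kn}` of a dyadic cube. -/
def cubeVol (n : ℕ) (Q : DyadicCube n) : ℝ := 2 ^ (Q.1 * (n:ℤ))

/-- The pointset of a dyadic cube. -/
def cubeSet (n : ℕ) (Q : DyadicCube n) : Set (Fin n → ℝ) :=
  Set.univ.pi fun t => Set.Ico ((Q.2 t : ℝ) * 2 ^ Q.1) (((Q.2 t : ℝ) + 1) * 2 ^ Q.1)

/-- The directional Haar projection `P^{(ε)}`. -/
def haarProj (n : ℕ) (ε : Fin n → Bool) (u : (Fin n → ℝ) → ℝ) (x : Fin n → ℝ) : ℝ :=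
  ∑' Q : DyadicCube n, (∫ y, u y * haarCube n ε Q y) * haarCube n ε Q x / cubeVol n Q

/-- The Fourier transform `ℱu(ξ) = ∫ e^{-i⟨x,ξ⟩} u(x) dx`. -/
def fourierT (n : ℕ) (u : (Fin n → ℝ) → ℂ) (ξ : Fin n → ℝ) : ℂ :=
  ∫ x : Fin n → ℝ, Complex.exp (-(Complex.I) * ((∑ t, x t * ξ t : ℝ) : ℂ)) * u x

/-- The inverse Fourier transform. -/
def invFourierT (n : ℕ) (v : (Fin n → ℝ) → ℂ) (x : Fin n → ℝ) : ℂ :=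
  (((2 * Real.pi) ^ n : ℝ) : ℂ)⁻¹ *
    ∫ ξ : Fin n → ℝ, Complex.exp (Complex.I * ((∑ t, x t * ξ t : ℝ) : ℂ)) * v ξ

/-- The Riesz transform `R_i u = -√-1 ℱ⁻¹((ξ_i/|ξ|) ℱu)`. -/
def riesz (n : ℕ) (i : Fin n) (u : (Fin n → ℝ) → ℝ) (x : Fin n → ℝ) : ℂ :=
  -(Complex.I) * invFourierT n
    (fun ξ => ((ξ i / Real.sqrt (∑ t, ξ t ^ 2) : ℝ) : ℂ) * fourierT n (fun y => ((u y : ℝ) : ℂ)) ξ) x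

/-- The `j`-th standard direction `e_j`. -/
def stdDir (n : ℕ) (j : Fin n) : Fin n → Bool := fun t => decide (t = j)

end
/-- A function `f : ℝ^n → ℝ` is separately convex if it is convex in each of its
variables separately. -/
def SeparatelyConvex (n : ℕ) (f : (Fin n → ℝ) → ℝ) : Prop :=
  ∀ (i : Fin n) (a : Fin n → ℝ),
    ConvexOn ℝ Set.univ (fun t : ℝ => f (Function.update a i t))

/-!
Each `P^{(e_j)}(v_j)` is a finite Haar sum, so `w = P(v)` is a finite dyadic martingale:
passing from a dyadic cube `B` to one of its `2^n` children `B_σ` changes the mean of `w_j` by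
`±c_j`, with the sign read off from the `j`-th binary digit of `σ` alone, since `h_B^{(e_j)}`
depends on `x_j` only through the half of `B` containing it. Convexity of `f` in one variable at a time gives
`2^n f(a) ≤ ∑_σ f(a ± c)`, and induction over the finitely many generations of the expansion
yields `|B| f(⨍_B w) ≤ ∫_B f ∘ w`; on `[0,1]^n` the mean is the integral.
-/

open Set

noncomputable section

def dyadicInterval (k i : ℤ) : Set ℝ := Ico ((i : ℝ) * 2 ^ k) (((i : ℝ) + 1) * 2 ^ k)

lemma indInt_eq_indicator (k i : ℤ) : indInt k i = (dyadicInterval k i).indicator 1 := rfl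

lemma left_mem_dyadicInterval (k i : ℤ) : (i : ℝ) * 2 ^ k ∈ dyadicInterval k i :=
  ⟨le_rfl, by have := zpow_pos (two_pos : (0 : ℝ) < 2) k; linarith⟩

lemma dyadicInterval_eq_union (k i : ℤ) :
    dyadicInterval k i = dyadicInterval (k - 1) (2 * i) ∪ dyadicInterval (k - 1) (2 * i + 1) := by
  have hk : (2 : ℝ) ^ k = 2 ^ (k - 1) * 2 := by
    rw [← zpow_add_one₀ two_ne_zero, sub_add_cancel]
  ext x
  simp only [dyadicInterval, mem_union, mem_Ico, hk]
  push_cast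
  constructor
  · rintro ⟨h1, h2⟩
    by_cases hx : x < (2 * (i : ℝ) + 1) * 2 ^ (k - 1)
    · exact Or.inl ⟨by linarith, hx⟩
    · exact Or.inr ⟨by linarith, by linarith⟩
  · have := zpow_pos (two_pos : (0 : ℝ) < 2) (k - 1)
    rintro (⟨h1, h2⟩ | ⟨h1, h2⟩) <;> constructor <;> nlinarith

lemma disjoint_dyadicInterval {k i i' : ℤ} (h : i ≠ i') :
    Disjoint (dyadicInterval k i) (dyadicInterval k i') := by
  rw [Set.disjoint_left]
  rintro x ⟨h1, h2⟩ ⟨g1, g2⟩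
  have hpos := zpow_pos (two_pos : (0 : ℝ) < 2) k
  rcases h.lt_or_gt with hlt | hlt
  · have : (i : ℝ) + 1 ≤ i' := by exact_mod_cast hlt
    nlinarith
  · have : (i' : ℝ) + 1 ≤ i := by exact_mod_cast hlt
    nlinarith

lemma dyadicInterval_subset_or_disjoint {k' k : ℤ} (i' i : ℤ) (h : k' ≤ k) :
    dyadicInterval k' i' ⊆ dyadicInterval k i ∨
      Disjoint (dyadicInterval k' i') (dyadicInterval k i) := by
  -- `dyadicInterval k i` is tiled by the level-`k'` intervals with indices in `[i m, (i + 1) m)`.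
  set m : ℤ := 2 ^ (k - k').toNat
  have hm : (2 : ℝ) ^ k = 2 ^ k' * m := by
    rw [Int.cast_pow, Int.cast_ofNat, ← zpow_natCast, Int.toNat_of_nonneg (sub_nonneg.mpr h),
      ← zpow_add₀ two_ne_zero, add_sub_cancel]
  have hpos := zpow_pos (two_pos : (0 : ℝ) < 2) k'
  by_cases hc : i * m ≤ i' ∧ i' + 1 ≤ (i + 1) * m
  · left
    have c1 : ((i * m : ℤ) : ℝ) ≤ i' := by exact_mod_cast hc.1
    have c2 : (i' : ℝ) + 1 ≤ ((i + 1) * m : ℤ) := by exact_mod_cast hc.2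
    push_cast at c1 c2
    rintro x ⟨h1, h2⟩
    constructor <;> rw [hm] <;> nlinarith
  · right
    rw [Set.disjoint_left]
    rintro x ⟨h1, h2⟩ ⟨g1, g2⟩
    rw [hm] at g1 g2
    rcases not_and_or.mp hc with hc | hc
    · have c : (i' : ℝ) + 1 ≤ (i * m : ℤ) := by
        exact_mod_cast Int.add_one_le_iff.mpr (not_le.mp hc)
      push_cast at c
      nlinarith
    · have c : (((i + 1) * m : ℤ) : ℝ) ≤ i' := by
        exact_mod_cast Int.lt_add_one_iff.mp (not_le.mp hc)
      push_cast at c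
      nlinarith

lemma haarInt_eq_sub (k i : ℤ) :
    haarInt k i = indInt (k - 1) (2 * i) - indInt (k - 1) (2 * i + 1) := by
  have hk : (2 : ℝ) ^ k = 2 ^ (k - 1) * 2 := by
    rw [← zpow_add_one₀ two_ne_zero, sub_add_cancel]
  have hpos := zpow_pos (two_pos : (0 : ℝ) < 2) k
  ext x
  have e1 : (x - i * 2 ^ k) / 2 ^ k ∈ Ico (0 : ℝ) (1 / 2) ↔
      x ∈ dyadicInterval (k - 1) (2 * i) := by
    simp only [mem_Ico, dyadicInterval, le_div_iff₀ hpos, div_lt_iff₀ hpos]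
    push_cast
    rw [hk]
    constructor <;> rintro ⟨h1, h2⟩ <;> constructor <;> linarith
  have e2 : (x - i * 2 ^ k) / 2 ^ k ∈ Ico (1 / 2 : ℝ) 1 ↔
      x ∈ dyadicInterval (k - 1) (2 * i + 1) := by
    simp only [mem_Ico, dyadicInterval, le_div_iff₀ hpos, div_lt_iff₀ hpos]
    push_cast
    rw [hk]
    constructor <;> rintro ⟨h1, h2⟩ <;> constructor <;> linarith
  simp only [haarInt, haar0, Pi.sub_apply, indInt_eq_indicator, indicator, Pi.one_apply]
  classical
  exact congrArg₂ (· - ·) (if_congr e1 rfl rfl) (if_congr e2 rfl rfl)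

lemma measurable_indInt (k i : ℤ) : Measurable (indInt k i) :=
  measurable_const.indicator measurableSet_Ico

lemma integrable_indInt (k i : ℤ) : Integrable (indInt k i) :=
  (integrable_indicator_iff measurableSet_Ico).mpr
    (integrableOn_const measure_Ico_lt_top.ne)

lemma integral_indInt (k i : ℤ) : ∫ x, indInt k i x = 2 ^ k := by
  unfold indInt
  rw [integral_indicator_const _ measurableSet_Ico, measureReal_def, Real.volume_Ico,
    smul_eq_mul, mul_one,
    ENNReal.toReal_ofReal (by nlinarith [zpow_pos (two_pos : (0 : ℝ) < 2) k])]
  ring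

lemma measurable_haarInt (k i : ℤ) : Measurable (haarInt k i) := by
  rw [haarInt_eq_sub]
  exact (measurable_indInt _ _).sub (measurable_indInt _ _)

lemma integrable_haarInt (k i : ℤ) : Integrable (haarInt k i) := by
  rw [haarInt_eq_sub]
  exact (integrable_indInt _ _).sub (integrable_indInt _ _)

lemma integral_haarInt (k i : ℤ) : ∫ x, haarInt k i x = 0 := by
  rw [haarInt_eq_sub, Pi.sub_def,
    integral_sub (integrable_indInt _ _) (integrable_indInt _ _), integral_indInt, integral_indInt,
    sub_self]

lemma indInt_eq_zero_of_notMem {k i : ℤ} {x : ℝ} (h : x ∉ dyadicInterval k i) :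
    indInt k i x = 0 :=
  indicator_of_notMem h _

lemma haarInt_eq_zero_of_notMem {k i : ℤ} {x : ℝ} (h : x ∉ dyadicInterval k i) :
    haarInt k i x = 0 := by
  rw [dyadicInterval_eq_union, mem_union, not_or] at h
  rw [haarInt_eq_sub, Pi.sub_apply, indInt_eq_zero_of_notMem h.1, indInt_eq_zero_of_notMem h.2,
    sub_zero]

lemma haarInt_of_mem_left {k i : ℤ} {x : ℝ} (h : x ∈ dyadicInterval (k - 1) (2 * i)) :
    haarInt k i x = 1 := by
  have h' : x ∉ dyadicInterval (k - 1) (2 * i + 1) :=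
    disjoint_left.mp (disjoint_dyadicInterval (by omega)) h
  rw [haarInt_eq_sub, Pi.sub_apply, indInt_eq_zero_of_notMem h', indInt_eq_indicator,
    indicator_of_mem h, Pi.one_apply, sub_zero]

lemma haarInt_of_mem_right {k i : ℤ} {x : ℝ} (h : x ∈ dyadicInterval (k - 1) (2 * i + 1)) :
    haarInt k i x = -1 := by
  have h' : x ∉ dyadicInterval (k - 1) (2 * i) :=
    disjoint_right.mp (disjoint_dyadicInterval (by omega)) h
  rw [haarInt_eq_sub, Pi.sub_apply, indInt_eq_zero_of_notMem h', indInt_eq_indicator,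
    indicator_of_mem h, Pi.one_apply, zero_sub]

lemma abs_indInt_le_one (k i : ℤ) (x : ℝ) : |indInt k i x| ≤ 1 := by
  by_cases h : x ∈ dyadicInterval k i
  · rw [indInt_eq_indicator, indicator_of_mem h, Pi.one_apply, abs_one]
  · rw [indInt_eq_zero_of_notMem h, abs_zero]
    exact zero_le_one

lemma abs_haarInt_le_one (k i : ℤ) (x : ℝ) : |haarInt k i x| ≤ 1 := by
  by_cases hl : x ∈ dyadicInterval (k - 1) (2 * i)
  · rw [haarInt_of_mem_left hl, abs_one]
  by_cases hr : x ∈ dyadicInterval (k - 1) (2 * i + 1)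
  · rw [haarInt_of_mem_right hr, abs_neg, abs_one]
  rw [haarInt_eq_zero_of_notMem (by rw [dyadicInterval_eq_union]; exact fun h => h.elim hl hr),
    abs_zero]
  exact zero_le_one

lemma indInt_const_on {k' k : ℤ} (i' i : ℤ) (h : k' ≤ k) :
    ∃ c : ℝ, ∀ x ∈ dyadicInterval k' i', indInt k i x = c := by
  rcases dyadicInterval_subset_or_disjoint i' i h with hs | hd
  · exact ⟨1, fun x hx => indicator_of_mem (hs hx) _⟩
  · exact ⟨0, fun x hx => indInt_eq_zero_of_notMem (disjoint_left.mp hd hx)⟩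

lemma haarInt_const_on {k' k : ℤ} (i' i : ℤ) (h : k' < k) :
    ∃ c : ℝ, ∀ x ∈ dyadicInterval k' i', haarInt k i x = c := by
  obtain ⟨c₁, hc₁⟩ := indInt_const_on i' (2 * i) (show k' ≤ k - 1 by omega)
  obtain ⟨c₂, hc₂⟩ := indInt_const_on i' (2 * i + 1) (show k' ≤ k - 1 by omega)
  exact ⟨c₁ - c₂, fun x hx => by rw [haarInt_eq_sub, Pi.sub_apply, hc₁ x hx, hc₂ x hx]⟩

def haarFactor {n : ℕ} (ε : Fin n → Bool) (Q : DyadicCube n) (t : Fin n) : ℝ → ℝ :=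
  if ε t then haarInt Q.1 (Q.2 t) else indInt Q.1 (Q.2 t)

section HaarFactor

variable {n : ℕ} (ε : Fin n → Bool) (Q : DyadicCube n) (t : Fin n)

lemma haarCube_eq_prod (x : Fin n → ℝ) : haarCube n ε Q x = ∏ t, haarFactor ε Q t (x t) :=
  Finset.prod_congr rfl fun t _ => by unfold haarFactor; split <;> rfl

lemma measurable_haarFactor : Measurable (haarFactor ε Q t) := by
  unfold haarFactor; split
  exacts [measurable_haarInt _ _, measurable_indInt _ _]

lemma integrable_haarFactor : Integrable (haarFactor ε Q t) := by
  unfold haarFactor; split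
  exacts [integrable_haarInt _ _, integrable_indInt _ _]

lemma abs_haarFactor_le_one (y : ℝ) : |haarFactor ε Q t y| ≤ 1 := by
  unfold haarFactor; split
  exacts [abs_haarInt_le_one _ _ _, abs_indInt_le_one _ _ _]

variable {ε Q t}

lemma haarFactor_eq_zero_of_notMem {y : ℝ} (h : y ∉ dyadicInterval Q.1 (Q.2 t)) :
    haarFactor ε Q t y = 0 := by
  unfold haarFactor; split
  exacts [haarInt_eq_zero_of_notMem h, indInt_eq_zero_of_notMem h]

lemma haarFactor_const_on {k i : ℤ} (h : k < Q.1) :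
    ∃ c : ℝ, ∀ y ∈ dyadicInterval k i, haarFactor ε Q t y = c := by
  unfold haarFactor; split
  exacts [haarInt_const_on i _ h, indInt_const_on i _ h.le]

end HaarFactor

section HaarCube

variable {n : ℕ} {ε ε' : Fin n → Bool} {Q Q' S : DyadicCube n}

lemma mem_cubeSet_iff {x : Fin n → ℝ} :
    x ∈ cubeSet n Q ↔ ∀ t, x t ∈ dyadicInterval Q.1 (Q.2 t) :=
  mem_univ_pi

lemma measurableSet_cubeSet (Q : DyadicCube n) : MeasurableSet (cubeSet n Q) :=
  MeasurableSet.univ_pi fun _ => measurableSet_Ico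

lemma haarCube_eq_zero_of_notMem {x : Fin n → ℝ} (h : x ∉ cubeSet n Q) :
    haarCube n ε Q x = 0 := by
  obtain ⟨t, ht⟩ := not_forall.mp (mt mem_cubeSet_iff.mpr h)
  rw [haarCube_eq_prod]
  exact Finset.prod_eq_zero (Finset.mem_univ t) (haarFactor_eq_zero_of_notMem ht)

lemma measurable_haarCube (ε : Fin n → Bool) (Q : DyadicCube n) :
    Measurable (haarCube n ε Q) := by
  simp only [funext (haarCube_eq_prod ε Q)]
  exact Finset.measurable_prod _ fun t _ =>
    (measurable_haarFactor ε Q t).comp (measurable_pi_apply t)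

lemma integrable_haarCube (ε : Fin n → Bool) (Q : DyadicCube n) :
    Integrable (haarCube n ε Q) := by
  simp only [funext (haarCube_eq_prod ε Q)]
  exact Integrable.fintype_prod fun t => integrable_haarFactor ε Q t

lemma abs_haarCube_le_one (ε : Fin n → Bool) (Q : DyadicCube n) (x : Fin n → ℝ) :
    |haarCube n ε Q x| ≤ 1 := by
  rw [haarCube_eq_prod, Finset.abs_prod]
  exact Finset.prod_le_one (fun t _ => abs_nonneg _) fun t _ => abs_haarFactor_le_one ε Q t _

lemma integrable_haarCube_mul_haarCube (ε' ε : Fin n → Bool) (Q' Q : DyadicCube n) :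
    Integrable fun x => haarCube n ε' Q' x * haarCube n ε Q x :=
  (integrable_haarCube ε Q).bdd_mul (measurable_haarCube ε' Q').aestronglyMeasurable
    (ae_of_all _ fun x => abs_haarCube_le_one ε' Q' x)

lemma integral_haarCube {j : Fin n} (hj : ε j = true) : ∫ x, haarCube n ε Q x = 0 := by
  simp only [haarCube_eq_prod]
  rw [integral_fintype_prod_volume_eq_prod (fun t => haarFactor ε Q t)]
  refine Finset.prod_eq_zero (Finset.mem_univ j) ?_
  rw [haarFactor, if_pos hj, integral_haarInt]

lemma setIntegral_haarCube_of_subset {s : Set (Fin n → ℝ)} (hQs : cubeSet n Q ⊆ s) {j : Fin n}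
    (hj : ε j = true) : ∫ x in s, haarCube n ε Q x = 0 := by
  rw [setIntegral_eq_integral_of_forall_compl_eq_zero
    fun x hx => haarCube_eq_zero_of_notMem fun hQ => hx (hQs hQ)]
  exact integral_haarCube hj

lemma haarCube_const_on (h : S.1 < Q.1) :
    ∃ c : ℝ, ∀ x ∈ cubeSet n S, haarCube n ε Q x = c := by
  choose c hc using fun t => haarFactor_const_on (ε := ε) (t := t) (i := S.2 t) h
  refine ⟨∏ t, c t, fun x hx => ?_⟩
  rw [haarCube_eq_prod]
  exact Finset.prod_congr rfl fun t _ => hc t _ (mem_cubeSet_iff.mp hx t)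

lemma cubeSet_subset_or_disjoint (h : Q.1 ≤ S.1) :
    cubeSet n Q ⊆ cubeSet n S ∨ Disjoint (cubeSet n Q) (cubeSet n S) := by
  by_cases hsub : ∀ t, dyadicInterval Q.1 (Q.2 t) ⊆ dyadicInterval S.1 (S.2 t)
  · exact Or.inl (pi_mono fun t _ => hsub t)
  · obtain ⟨t, ht⟩ := not_forall.mp hsub
    have hdisj := (dyadicInterval_subset_or_disjoint (Q.2 t) (S.2 t) h).resolve_left ht
    exact Or.inr (disjoint_left.mpr fun x hQ hS =>
      disjoint_left.mp hdisj (mem_cubeSet_iff.mp hQ t) (mem_cubeSet_iff.mp hS t))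

lemma disjoint_cubeSet_of_ne (hk : Q.1 = S.1) (hne : Q ≠ S) :
    Disjoint (cubeSet n Q) (cubeSet n S) := by
  have : Q.2 ≠ S.2 := fun h => hne (Prod.ext hk h)
  obtain ⟨t, ht⟩ := Function.ne_iff.mp this
  have hdisj : Disjoint (dyadicInterval Q.1 (Q.2 t)) (dyadicInterval S.1 (S.2 t)) :=
    hk ▸ disjoint_dyadicInterval ht
  exact disjoint_left.mpr fun x hQ hS =>
    disjoint_left.mp hdisj (mem_cubeSet_iff.mp hQ t) (mem_cubeSet_iff.mp hS t)

lemma setIntegral_haarCube_of_le (h : Q.1 ≤ S.1) {j : Fin n} (hj : ε j = true) :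
    ∫ x in cubeSet n S, haarCube n ε Q x = 0 := by
  rcases cubeSet_subset_or_disjoint h with hQS | hQS
  · exact setIntegral_haarCube_of_subset hQS hj
  · exact setIntegral_eq_zero_of_forall_eq_zero fun x hx =>
      haarCube_eq_zero_of_notMem (disjoint_right.mp hQS hx)

lemma integral_haarCube_mul_haarCube_of_lt (h : Q'.1 < Q.1) {j : Fin n} (hj : ε' j = true) :
    ∫ x, haarCube n ε' Q' x * haarCube n ε Q x = 0 := by
  obtain ⟨c, hc⟩ := haarCube_const_on (ε := ε) h
  have hmul : ∀ x, haarCube n ε' Q' x * haarCube n ε Q x = c * haarCube n ε' Q' x := by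
    intro x
    by_cases hx : x ∈ cubeSet n Q'
    · rw [hc x hx, mul_comm]
    · rw [haarCube_eq_zero_of_notMem hx, mul_zero, zero_mul]
  simp only [hmul, integral_const_mul, integral_haarCube hj, mul_zero]

lemma integral_haarCube_mul_haarCube_of_ne (hne : Q' ≠ Q) {j' j : Fin n} (hj' : ε' j' = true)
    (hj : ε j = true) : ∫ x, haarCube n ε' Q' x * haarCube n ε Q x = 0 := by
  rcases lt_trichotomy Q'.1 Q.1 with hlt | heq | hgt
  · exact integral_haarCube_mul_haarCube_of_lt hlt hj'
  · refine integral_eq_zero_of_ae (ae_of_all _ fun x => ?_)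
    by_cases hx : x ∈ cubeSet n Q'
    · exact mul_eq_zero_of_right _
        (haarCube_eq_zero_of_notMem (disjoint_left.mp (disjoint_cubeSet_of_ne heq hne) hx))
    · exact mul_eq_zero_of_left (haarCube_eq_zero_of_notMem hx) _
  · simp only [mul_comm (haarCube n ε' Q' _)]
    exact integral_haarCube_mul_haarCube_of_lt hgt hj

end HaarCube

namespace SeparatelyConvex

lemma two_mul_le_add {n : ℕ} {f : (Fin n → ℝ) → ℝ} (hf : SeparatelyConvex n f) (i : Fin n)
    (a : Fin n → ℝ) (c : ℝ) :
    2 * f a ≤ f (Function.update a i (a i + c)) + f (Function.update a i (a i - c)) := by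
  have h := (hf i a).2 (mem_univ (a i + c)) (mem_univ (a i - c))
    (by norm_num : (0 : ℝ) ≤ 1 / 2) (by norm_num : (0 : ℝ) ≤ 1 / 2) (by norm_num)
  simp only [smul_eq_mul] at h
  rw [show 1 / 2 * (a i + c) + 1 / 2 * (a i - c) = a i by ring, Function.update_eq_self] at h
  linarith

lemma comp_cons {n : ℕ} {f : (Fin (n + 1) → ℝ) → ℝ} (hf : SeparatelyConvex (n + 1) f)
    (y : ℝ) :
    SeparatelyConvex n fun x => f (Fin.cons y x) := fun i a => by
  simpa only [Fin.cons_update] using hf i.succ (Fin.cons y a)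

theorem two_pow_mul_le_sum_corners : ∀ {n : ℕ} {f : (Fin n → ℝ) → ℝ},
    SeparatelyConvex n f → ∀ a c : Fin n → ℝ,
    2 ^ n * f a ≤ ∑ σ : Fin n → Bool, f fun j => a j + (if σ j then -1 else 1) * c j
  | 0, f, _, a, c => by
    simp [Subsingleton.elim (fun j => a j + _) a]
  | n + 1, f, hf, a, c => by
    have hcorner : ∀ (s : Bool) (τ : Fin n → Bool),
        (fun j => a j + (if (Fin.cons s τ : Fin (n + 1) → Bool) j then -1 else 1) * c j) =
          Fin.cons (a 0 + (if s then -1 else 1) * c 0)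
            (fun j => Fin.tail a j + (if τ j then -1 else 1) * Fin.tail c j) := by
      intro s τ
      ext j
      cases j using Fin.cases <;> rfl
    have hupdate : ∀ y, Function.update a 0 y = Fin.cons y (Fin.tail a) := fun y => by
      rw [← Fin.update_cons_zero (a 0), Fin.cons_self_tail]
    rw [← (Fin.consEquiv fun _ => Bool).sum_comp, Fintype.sum_prod_type, Fintype.sum_bool]
    simp only [Fin.consEquiv_apply, hcorner]
    -- Midpoint convexity in the first coordinate, then the induction hypothesis on the two
    -- slices through `a 0 ± c 0`.
    have hmid := hf.two_mul_le_add 0 a (c 0)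
    rw [hupdate, hupdate] at hmid
    have hplus := two_pow_mul_le_sum_corners (hf.comp_cons (a 0 + c 0)) (Fin.tail a) (Fin.tail c)
    have hminus := two_pow_mul_le_sum_corners (hf.comp_cons (a 0 - c 0)) (Fin.tail a) (Fin.tail c)
    simp only [↓reduceIte, Bool.false_eq_true, neg_one_mul, one_mul, ← sub_eq_add_neg]
    have := mul_le_mul_of_nonneg_left hmid (pow_nonneg zero_le_two n)
    rw [pow_succ]
    linarith

end SeparatelyConvex

lemma stdDir_self (n : ℕ) (j : Fin n) : stdDir n j j = true := decide_eq_true rfl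

-- By orthogonality, the projection of a finite Haar sum only sees the cubes of that sum.
lemma exists_haarProj_finsetSum_eq {n : ℕ} {ε : Fin n → Bool} {j : Fin n} (hj : ε j = true)
    {F : Finset ((Fin n → Bool) × DyadicCube n)} (hF : ∀ q ∈ F, q.1 ≠ fun _ => false)
    (c : (Fin n → Bool) × DyadicCube n → ℝ) :
    ∃ b : DyadicCube n → ℝ, haarProj n ε (fun x => ∑ q ∈ F, c q * haarCube n q.1 q.2 x) =
      fun x => ∑ Q ∈ F.image Prod.snd, b Q * haarCube n ε Q x := by
  refine ⟨fun Q =>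
    (∫ y, (∑ q ∈ F, c q * haarCube n q.1 q.2 y) * haarCube n ε Q y) / cubeVol n Q, ?_⟩
  funext x
  rw [haarProj, tsum_eq_sum fun Q hQ => ?_]
  · exact Finset.sum_congr rfl fun Q _ => (div_mul_eq_mul_div _ _ _).symm
  · simp only [Finset.sum_mul, mul_assoc]
    rw [integral_finsetSum _ fun q _ =>
      (integrable_haarCube_mul_haarCube _ _ _ _).const_mul _]
    rw [Finset.sum_eq_zero fun q hq => ?_, zero_mul, zero_div]
    obtain ⟨t, ht⟩ := Function.ne_iff.mp (hF q hq)
    rw [integral_const_mul, integral_haarCube_mul_haarCube_of_ne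
      (fun h => hQ (Finset.mem_image.mpr ⟨q, hq, h⟩)) (Bool.eq_true_of_not_eq_false ht) hj,
      mul_zero]

def child {n : ℕ} (B : DyadicCube n) (σ : Fin n → Bool) : DyadicCube n :=
  (B.1 - 1, fun t => 2 * B.2 t + if σ t then 1 else 0)

def unitCube (n : ℕ) : DyadicCube n := (0, 0)

section Volume

variable {n : ℕ}

lemma nonempty_cubeSet (B : DyadicCube n) : (cubeSet n B).Nonempty :=
  ⟨fun t => B.2 t * 2 ^ B.1, mem_cubeSet_iff.mpr fun _ => left_mem_dyadicInterval _ _⟩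

lemma volume_cubeSet (B : DyadicCube n) :
    volume (cubeSet n B) = ENNReal.ofReal (2 ^ B.1) ^ n := by
  simp only [cubeSet, volume_pi_pi, Real.volume_Ico, add_mul, one_mul, add_sub_cancel_left,
    Finset.prod_const, Finset.card_univ, Fintype.card_fin]

lemma volume_cubeSet_ne_top (B : DyadicCube n) : volume (cubeSet n B) ≠ ⊤ := by
  rw [volume_cubeSet]
  exact ENNReal.pow_ne_top ENNReal.ofReal_ne_top

lemma measureReal_cubeSet (B : DyadicCube n) : volume.real (cubeSet n B) = cubeVol n B := by
  rw [measureReal_def, volume_cubeSet, ENNReal.toReal_pow,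
    ENNReal.toReal_ofReal (zpow_pos two_pos _).le, cubeVol, zpow_mul, zpow_natCast]

lemma cubeVol_pos (B : DyadicCube n) : 0 < cubeVol n B := zpow_pos two_pos _

lemma cubeVol_eq_two_pow_mul_child (B : DyadicCube n) (σ : Fin n → Bool) :
    cubeVol n B = 2 ^ n * cubeVol n (child B σ) := by
  rw [cubeVol, cubeVol, child, ← zpow_natCast, ← zpow_add₀ two_ne_zero]
  ring_nf

lemma cubeVol_unitCube : cubeVol n (unitCube n) = 1 := by
  rw [cubeVol, unitCube, zero_mul, zpow_zero]

lemma setAverage_unitCube {E : Type*} [NormedAddCommGroup E] [NormedSpace ℝ E]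
    (g : (Fin n → ℝ) → E) :
    ⨍ x in cubeSet n (unitCube n), g x = ∫ x in cubeSet n (unitCube n), g x := by
  rw [setAverage_eq, measureReal_cubeSet, cubeVol_unitCube, inv_one, one_smul]

lemma Icc_ae_eq_cubeSet_unitCube :
    Icc (0 : Fin n → ℝ) 1 =ᵐ[volume] cubeSet n (unitCube n) := by
  have : cubeSet n (unitCube n) = univ.pi fun _ => Ico 0 1 := by simp [cubeSet, unitCube]
  rw [this]
  exact Measure.univ_pi_Ico_ae_eq_Icc.symm

end Volume

section Child

variable {n : ℕ} {B : DyadicCube n}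

lemma mem_dyadicInterval_of_mem_child {σ : Fin n → Bool} {x : Fin n → ℝ}
    (hx : x ∈ cubeSet n (child B σ)) (t : Fin n) :
    x t ∈ dyadicInterval (B.1 - 1) (2 * B.2 t + if σ t then 1 else 0) :=
  mem_cubeSet_iff.mp hx t

lemma cubeSet_child_subset (σ : Fin n → Bool) : cubeSet n (child B σ) ⊆ cubeSet n B :=
  fun x hx => mem_cubeSet_iff.mpr fun t => by
    have := mem_dyadicInterval_of_mem_child hx t
    rw [dyadicInterval_eq_union]
    split_ifs at this
    exacts [Or.inr this, Or.inl (by simpa using this)]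

lemma iUnion_cubeSet_child : ⋃ σ, cubeSet n (child B σ) = cubeSet n B := by
  classical
  refine subset_antisymm (iUnion_subset cubeSet_child_subset) fun x hx => mem_iUnion.mpr ?_
  refine ⟨fun t => decide (x t ∈ dyadicInterval (B.1 - 1) (2 * B.2 t + 1)),
    mem_cubeSet_iff.mpr fun t => ?_⟩
  have := mem_cubeSet_iff.mp hx t
  rw [dyadicInterval_eq_union] at this
  by_cases h : x t ∈ dyadicInterval (B.1 - 1) (2 * B.2 t + 1)
  · simp [child, h]
  · simpa [child, h] using this.resolve_right h

lemma pairwise_disjoint_cubeSet_child :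
    Pairwise fun σ σ' => Disjoint (cubeSet n (child B σ)) (cubeSet n (child B σ')) := by
  intro σ σ' hne
  obtain ⟨t, ht⟩ := Function.ne_iff.mp hne
  refine disjoint_cubeSet_of_ne rfl fun h => ht ?_
  have := congrFun (congrArg Prod.snd h) t
  simp only [child] at this
  revert this
  cases σ t <;> cases σ' t <;> simp

lemma haarCube_stdDir_of_mem_child {σ : Fin n → Bool} {x : Fin n → ℝ}
    (hx : x ∈ cubeSet n (child B σ)) (j : Fin n) :
    haarCube n (stdDir n j) B x = if σ j then -1 else 1 := by
  rw [haarCube_eq_prod, Finset.prod_eq_single j (fun t _ htj => ?_) (by simp)]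
  · have := mem_dyadicInterval_of_mem_child hx j
    rw [haarFactor, if_pos (stdDir_self n j)]
    split_ifs at this ⊢
    exacts [haarInt_of_mem_right this, haarInt_of_mem_left (by simpa using this)]
  · rw [haarFactor, if_neg (by simpa [stdDir] using htj), indInt_eq_indicator,
      indicator_of_mem (mem_cubeSet_iff.mp (cubeSet_child_subset σ hx) t), Pi.one_apply]

end Child

def haarField (n : ℕ) (G : Fin n → Finset (DyadicCube n)) (b : Fin n → DyadicCube n → ℝ)
    (x : Fin n → ℝ) : Fin n → ℝ :=
  fun j => ∑ Q ∈ G j, b j Q * haarCube n (stdDir n j) Q x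

section HaarField

variable {n : ℕ} (G : Fin n → Finset (DyadicCube n)) (b : Fin n → DyadicCube n → ℝ)

lemma integrable_haarField_apply (j : Fin n) : Integrable fun x => haarField n G b x j :=
  integrable_finsetSum _ fun _ _ => (integrable_haarCube _ _).const_mul _

lemma setAverage_haarField_apply (B : DyadicCube n) (j : Fin n) :
    (⨍ x in cubeSet n B, haarField n G b x) j =
      (cubeVol n B)⁻¹ * ∫ x in cubeSet n B, haarField n G b x j := by
  rw [setAverage_eq, Pi.smul_apply,
    eval_integral (fun j => (integrable_haarField_apply G b j).integrableOn), measureReal_cubeSet,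
    smul_eq_mul]

lemma two_pow_mul_setIntegral_child_haarCube (B Q : DyadicCube n) (σ : Fin n → Bool)
    (j : Fin n) :
    2 ^ n * ∫ x in cubeSet n (child B σ), haarCube n (stdDir n j) Q x =
      (∫ x in cubeSet n B, haarCube n (stdDir n j) Q x) +
        if Q = B then (if σ j then -1 else 1) * cubeVol n B else 0 := by
  have hvol := cubeVol_eq_two_pow_mul_child B σ
  by_cases hQB : Q = B
  · subst hQB
    rw [if_pos rfl, setIntegral_haarCube_of_subset subset_rfl (stdDir_self n j), zero_add,
      setIntegral_congr_fun (measurableSet_cubeSet _) fun x hx =>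
        haarCube_stdDir_of_mem_child hx j,
      setIntegral_const, measureReal_cubeSet, smul_eq_mul, hvol]
    ring
  rw [if_neg hQB, add_zero]
  rcases lt_or_ge B.1 Q.1 with hlt | hle
  · obtain ⟨c, hc⟩ := haarCube_const_on (ε := stdDir n j) hlt
    rw [setIntegral_congr_fun (measurableSet_cubeSet _) fun x hx =>
        hc x (cubeSet_child_subset σ hx),
      setIntegral_congr_fun (measurableSet_cubeSet _) hc, setIntegral_const, setIntegral_const,
      measureReal_cubeSet, measureReal_cubeSet, hvol, smul_eq_mul, smul_eq_mul, mul_assoc]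
  rw [setIntegral_haarCube_of_le hle (stdDir_self n j)]
  refine mul_eq_zero_of_right _ ?_
  rcases hle.lt_or_eq with hlt | heq
  · exact setIntegral_haarCube_of_le (show Q.1 ≤ B.1 - 1 by omega) (stdDir_self n j)
  · exact setIntegral_eq_zero_of_forall_eq_zero fun x hx => haarCube_eq_zero_of_notMem fun hQ =>
      disjoint_left.mp (disjoint_cubeSet_of_ne heq hQB) hQ (cubeSet_child_subset σ hx)

lemma two_pow_mul_setIntegral_child_haarField (B : DyadicCube n) (σ : Fin n → Bool)
    (j : Fin n) :
    2 ^ n * ∫ x in cubeSet n (child B σ), haarField n G b x j =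
      (∫ x in cubeSet n B, haarField n G b x j) +
        (if σ j then -1 else 1) * cubeVol n B * (if B ∈ G j then b j B else 0) := by
  rw [← Finset.sum_ite_eq']
  simp only [haarField, integral_finsetSum _ fun Q _ =>
    ((integrable_haarCube _ _).const_mul _).integrableOn, integral_const_mul, Finset.mul_sum,
    ← Finset.sum_add_distrib]
  refine Finset.sum_congr rfl fun Q _ => ?_
  rw [mul_left_comm, two_pow_mul_setIntegral_child_haarCube]
  split_ifs <;> ring

-- Only the Haar functions on `B` itself distinguish the children of `B`: every other `h_Q` has
-- the same mean over each child as over `B`.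
lemma setAverage_child_haarField (B : DyadicCube n) (σ : Fin n → Bool) :
    ⨍ x in cubeSet n (child B σ), haarField n G b x =
      fun j => (⨍ x in cubeSet n B, haarField n G b x) j +
        (if σ j then -1 else 1) * (if B ∈ G j then b j B else 0) := by
  funext j
  have key := two_pow_mul_setIntegral_child_haarField G b B σ j
  have hpos := cubeVol_pos (child B σ)
  rw [setAverage_haarField_apply, setAverage_haarField_apply]
  rw [cubeVol_eq_two_pow_mul_child B σ] at key ⊢
  field_simp
  linear_combination key

lemma haarField_eq_of_mem {B : DyadicCube n} (h : ∀ j, ∀ Q ∈ G j, B.1 < Q.1)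
    {x y : Fin n → ℝ} (hx : x ∈ cubeSet n B) (hy : y ∈ cubeSet n B) :
    haarField n G b x = haarField n G b y := by
  funext j
  refine Finset.sum_congr rfl fun Q hQ => ?_
  obtain ⟨c, hc⟩ := haarCube_const_on (ε := stdDir n j) (h j Q hQ)
  rw [hc x hx, hc y hy]

end HaarField

def JensenOnCube {n : ℕ} (f : (Fin n → ℝ) → ℝ) (w : (Fin n → ℝ) → Fin n → ℝ)
    (B : DyadicCube n) : Prop :=
  IntegrableOn (fun x => f (w x)) (cubeSet n B) ∧
    cubeVol n B * f (⨍ x in cubeSet n B, w x) ≤ ∫ x in cubeSet n B, f (w x)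

section JensenOnCube

variable {n : ℕ} {f : (Fin n → ℝ) → ℝ} {w : (Fin n → ℝ) → Fin n → ℝ}
  {B : DyadicCube n}

lemma jensenOnCube_of_eqOn (a : Fin n → ℝ) (hw : ∀ x ∈ cubeSet n B, w x = a) :
    JensenOnCube f w B := by
  have hfw : EqOn (fun x => f (w x)) (fun _ => f a) (cubeSet n B) := fun x hx => by
    simp only [hw x hx]
  refine ⟨(integrableOn_const (volume_cubeSet_ne_top B)).congr_fun hfw.symm
    (measurableSet_cubeSet B), le_of_eq ?_⟩
  rw [setAverage_eq, setIntegral_congr_fun (measurableSet_cubeSet B) hw,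
    setIntegral_congr_fun (measurableSet_cubeSet B) hfw, setIntegral_const, setIntegral_const,
    measureReal_cubeSet, smul_smul, inv_mul_cancel₀ (cubeVol_pos B).ne', one_smul, smul_eq_mul]

lemma SeparatelyConvex.jensenOnCube_of_child (hf : SeparatelyConvex n f) (c : Fin n → ℝ)
    (hmean : ∀ σ, ⨍ x in cubeSet n (child B σ), w x =
      fun j => (⨍ x in cubeSet n B, w x) j + (if σ j then -1 else 1) * c j)
    (hchild : ∀ σ, JensenOnCube f w (child B σ)) : JensenOnCube f w B := by
  have hint : IntegrableOn (fun x => f (w x)) (cubeSet n B) := by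
    rw [← iUnion_cubeSet_child]
    exact integrableOn_finite_iUnion.mpr fun σ => (hchild σ).1
  refine ⟨hint, ?_⟩
  set m := ⨍ x in cubeSet n B, w x
  set V := cubeVol n (child B fun _ => true)
  calc cubeVol n B * f m = V * (2 ^ n * f m) := by
        rw [cubeVol_eq_two_pow_mul_child B fun _ => true]; ring
    _ ≤ V * ∑ σ : Fin n → Bool, f fun j => m j + (if σ j then -1 else 1) * c j :=
        mul_le_mul_of_nonneg_left (hf.two_pow_mul_le_sum_corners m c) (cubeVol_pos _).le
    _ = ∑ σ, cubeVol n (child B σ) * f (⨍ x in cubeSet n (child B σ), w x) := by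
        simp only [Finset.mul_sum, hmean]
        rfl
    _ ≤ ∑ σ, ∫ x in cubeSet n (child B σ), f (w x) :=
        Finset.sum_le_sum fun σ _ => (hchild σ).2
    _ = ∫ x in cubeSet n B, f (w x) := by
        rw [← integral_iUnion_fintype (fun σ => measurableSet_cubeSet _)
          pairwise_disjoint_cubeSet_child fun σ => (hchild σ).1, iUnion_cubeSet_child]

end JensenOnCube

namespace SeparatelyConvex

variable {n : ℕ} {f : (Fin n → ℝ) → ℝ}

-- When every cube of `G` is coarser than `B`, the field is constant on `B`; otherwise pass to
-- the children of `B`, which lie one generation closer to the finest cubes of `G`.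
lemma jensenOnCube_haarField_of_lt (hf : SeparatelyConvex n f)
    (G : Fin n → Finset (DyadicCube n)) (b : Fin n → DyadicCube n → ℝ) :
    ∀ (d : ℕ) (B : DyadicCube n), (∀ j, ∀ Q ∈ G j, B.1 - d < Q.1) →
      JensenOnCube f (haarField n G b) B
  | 0, B, h => by
    obtain ⟨x₀, hx₀⟩ := nonempty_cubeSet B
    exact jensenOnCube_of_eqOn _ fun x hx =>
      haarField_eq_of_mem G b (by simpa using h) hx hx₀
  | d + 1, B, h =>
    hf.jensenOnCube_of_child _ (setAverage_child_haarField G b B) fun σ =>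
      jensenOnCube_haarField_of_lt hf G b d (child B σ) fun j Q hQ => by
        have := h j Q hQ
        simp only [child]
        omega

theorem map_setAverage_haarField_le (hf : SeparatelyConvex n f)
    (G : Fin n → Finset (DyadicCube n)) (b : Fin n → DyadicCube n → ℝ) (B : DyadicCube n) :
    cubeVol n B * f (⨍ x in cubeSet n B, haarField n G b x) ≤
      ∫ x in cubeSet n B, f (haarField n G b x) := by
  obtain ⟨m, hm⟩ := (Finset.univ.biUnion fun j => (G j).image Prod.fst).bddBelow
  refine (hf.jensenOnCube_haarField_of_lt G b (B.1 - m + 1).toNat B fun j Q hQ => ?_).2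
  have := hm (Finset.mem_biUnion.mpr ⟨j, Finset.mem_univ j, Finset.mem_image_of_mem _ hQ⟩)
  omega

end SeparatelyConvex

end

theorem jensen_inequality_on_range_of_P_general
    (n : ℕ) (f : (Fin n → ℝ) → ℝ) (hconv : SeparatelyConvex n f)
    (v : Fin n → (Fin n → ℝ) → ℝ)
    (hfin : ∀ j, ∃ (F : Finset ((Fin n → Bool) × DyadicCube n))
      (c : (Fin n → Bool) × DyadicCube n → ℝ),
        (∀ q ∈ F, q.1 ≠ fun _ => false) ∧
        v j = fun x => ∑ q ∈ F, c q * haarCube n q.1 q.2 x) :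
    f (∫ x in Set.Icc (0 : Fin n → ℝ) 1,
        (fun j => haarProj n (stdDir n j) (v j) x : Fin n → ℝ)) ≤
      ∫ x in Set.Icc (0 : Fin n → ℝ) 1,
        f (fun j => haarProj n (stdDir n j) (v j) x) := by
  choose F c hF hv using hfin
  choose b hb using fun j => exists_haarProj_finsetSum_eq (stdDir_self n j) (hF j) (c j)
  set G := fun j => (F j).image Prod.snd
  have hP : ∀ x, (fun j => haarProj n (stdDir n j) (v j) x) = haarField n G b x := fun x => by
    funext j
    rw [hv j, hb j]
    rfl
  have hJensen := hconv.map_setAverage_haarField_le G b (unitCube n)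
  rw [cubeVol_unitCube, one_mul, setAverage_unitCube] at hJensen
  rw [show (fun x j => haarProj n (stdDir n j) (v j) x) = haarField n G b from funext hP]
  simp only [hP]
  rwa [setIntegral_congr_set Icc_ae_eq_cubeSet_unitCube,
    setIntegral_congr_set Icc_ae_eq_cubeSet_unitCube]

theorem jensen_inequality_on_range_of_P
    (n : ℕ) (hn : 1 ≤ n) (p : ℝ) (hp : 1 < p)
    (f : (Fin n → ℝ) → ℝ) (hconv : SeparatelyConvex n f)
    (v : Fin n → (Fin n → ℝ) → ℝ)
    (hmem : ∀ j, MemLp (v j) (ENNReal.ofReal p) volume)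
    (hfin : ∀ j, ∃ (F : Finset ((Fin n → Bool) × DyadicCube n))
      (c : (Fin n → Bool) × DyadicCube n → ℝ),
        (∀ q ∈ F, q.1 ≠ fun _ => false) ∧
        v j = fun x => ∑ q ∈ F, c q * haarCube n q.1 q.2 x) :
    f (∫ x in Set.Icc (0 : Fin n → ℝ) 1,
        (fun j => haarProj n (stdDir n j) (v j) x : Fin n → ℝ)) ≤
      ∫ x in Set.Icc (0 : Fin n → ℝ) 1,
        f (fun j => haarProj n (stdDir n j) (v j) x) :=
  jensen_inequality_on_range_of_P_general n f hconv v hfin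
end

section
/- Let 1 ≤ p < ∞ and let f : ℝ^n → ℝ be separately convex with 0 ≤ f(a) ≤ C(1 + |a|^p) for all a ∈ ℝ^n. Then there is a constant C′ (depending only on C, n, p) such that |f(s) − f(t)| ≤ C′ (1 + |s| + |t|)^{p−1} |s − t| for all s, t ∈ ℝ^n. -/
/-!
Move from `s` to `t` one coordinate at a time. Along each step `f` restricts to a convex
function of one real variable, and a convex function bounded by `M` on an interval of radius
`2R` is `2M/R`-Lipschitz on the concentric interval of radius `R`. With `R = 1 + |s| + |t|`
every point involved has norm below `3R`, where the growth bound gives `M ≲ C R^p`; this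
yields the Lipschitz constant `≲ C R^(p-1)` on each of the `n` steps.
-/

open scoped Real

/-- The Euclidean norm on `ℝ^n`. -/
noncomputable def euclNorm (n : ℕ) (x : Fin n → ℝ) : ℝ := Real.sqrt (∑ i, x i ^ 2)

section euclNorm

variable {n : ℕ}

lemma euclNorm_nonneg (x : Fin n → ℝ) : 0 ≤ euclNorm n x :=
  Real.sqrt_nonneg _

lemma abs_apply_le_euclNorm (x : Fin n → ℝ) (i : Fin n) : |x i| ≤ euclNorm n x := by
  rw [euclNorm, ← Real.sqrt_sq_eq_abs]
  exact Real.sqrt_le_sqrt (Finset.single_le_sum (fun j _ => sq_nonneg (x j)) (Finset.mem_univ i))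

lemma euclNorm_single (i : Fin n) (c : ℝ) : euclNorm n (Pi.single i c) = |c| := by
  simp [euclNorm, Pi.single_apply, ite_pow, Real.sqrt_sq_eq_abs]

lemma euclNorm_le_add_of_sq_le {x y z : Fin n → ℝ} (h : ∀ i, x i ^ 2 ≤ y i ^ 2 + z i ^ 2) :
    euclNorm n x ≤ euclNorm n y + euclNorm n z := by
  have hy : 0 ≤ ∑ i, y i ^ 2 := by positivity
  have hz : 0 ≤ ∑ i, z i ^ 2 := by positivity
  rw [euclNorm, Real.sqrt_le_iff]
  refine ⟨add_nonneg (euclNorm_nonneg y) (euclNorm_nonneg z), ?_⟩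
  calc ∑ i, x i ^ 2 ≤ ∑ i, y i ^ 2 + ∑ i, z i ^ 2 := by
        rw [← Finset.sum_add_distrib]; exact Finset.sum_le_sum fun i _ => h i
    _ ≤ (euclNorm n y + euclNorm n z) ^ 2 := by
        rw [euclNorm, euclNorm, add_sq, Real.sq_sqrt hy, Real.sq_sqrt hz]
        nlinarith [Real.sqrt_nonneg (∑ i, y i ^ 2), Real.sqrt_nonneg (∑ i, z i ^ 2)]

lemma euclNorm_update_le (x : Fin n → ℝ) (i : Fin n) (c : ℝ) :
    euclNorm n (Function.update x i c) ≤ euclNorm n x + |c| := by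
  rw [← euclNorm_single i c]
  refine euclNorm_le_add_of_sq_le fun j => ?_
  rcases eq_or_ne j i with rfl | hj
  · simpa using sq_nonneg (x j)
  · simp [hj]

end euclNorm

def stepPath {n : ℕ} (s t : Fin n → ℝ) (k : ℕ) : Fin n → ℝ :=
  fun i => if (i : ℕ) < k then t i else s i

section stepPath

variable {n : ℕ} (s t : Fin n → ℝ)

@[simp] lemma stepPath_zero : stepPath s t 0 = s := by
  funext i; simp [stepPath]

@[simp] lemma stepPath_self : stepPath s t n = t := by
  funext i; simp [stepPath]

lemma update_stepPath_apply_self (k : Fin n) :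
    Function.update (stepPath s t k) k (s k) = stepPath s t k := by
  funext i
  rcases eq_or_ne i k with rfl | hi
  · simp [stepPath]
  · simp [hi]

lemma update_stepPath_eq_stepPath_succ (k : Fin n) :
    Function.update (stepPath s t k) k (t k) = stepPath s t (k + 1) := by
  funext i
  rcases eq_or_ne i k with rfl | hi
  · simp [stepPath]
  · have hik : (i : ℕ) ≠ k := Fin.val_ne_of_ne hi
    simp only [Function.update_of_ne hi, stepPath]
    congr 1
    exact propext (by omega)

lemma euclNorm_stepPath_le (k : ℕ) :
    euclNorm n (stepPath s t k) ≤ euclNorm n s + euclNorm n t :=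
  euclNorm_le_add_of_sq_le fun i => by
    unfold stepPath
    split_ifs <;> nlinarith [sq_nonneg (s i), sq_nonneg (t i)]

end stepPath

lemma ConvexOn.abs_sub_le_of_abs_le {g : ℝ → ℝ} (hg : ConvexOn ℝ Set.univ g) {R M : ℝ}
    (hR : 0 < R) (hM : ∀ x, |x| < 2 * R → |g x| ≤ M) {a b : ℝ} (ha : |a| < R) (hb : |b| < R) :
    |g a - g b| ≤ 2 * M / R * |a - b| := by
  have hM0 : 0 ≤ M := (abs_nonneg _).trans (hM 0 (by simpa using hR))
  have hLip := (hg.subset (Set.subset_univ _) (convex_ball 0 (2 * R))).lipschitzOnWith_of_abs_le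
    hR (x₀ := 0) fun x hx => hM x (by simpa using hx)
  have hmem : ∀ x, |x| < R → x ∈ Metric.ball (0 : ℝ) (2 * R - R) := fun x hx => by
    simpa [two_mul] using hx
  simpa [Real.dist_eq, Real.coe_toNNReal _ (by positivity : 0 ≤ 2 * M / R)] using
    hLip.dist_le_mul a (hmem a ha) b (hmem b hb)

lemma SeparatelyConvex.abs_sub_le {n : ℕ} {f : (Fin n → ℝ) → ℝ} (hf : SeparatelyConvex n f)
    {R M : ℝ} (hR : 0 < R) (hM : ∀ a, euclNorm n a < 3 * R → |f a| ≤ M) {s t : Fin n → ℝ}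
    (hst : euclNorm n s + euclNorm n t < R) :
    |f s - f t| ≤ n * (2 * M / R) * euclNorm n (s - t) := by
  have hM0 : 0 ≤ M :=
    (abs_nonneg _).trans (hM s (by linarith [euclNorm_nonneg s, euclNorm_nonneg t]))
  have hstep : ∀ k : Fin n, |f (stepPath s t k) - f (stepPath s t (k + 1))| ≤
      2 * M / R * euclNorm n (s - t) := by
    intro k
    have hs := abs_apply_le_euclNorm s k
    have ht := abs_apply_le_euclNorm t k
    have hline : ∀ x, |x| < 2 * R → |f (Function.update (stepPath s t k) k x)| ≤ M :=
      fun x hx => hM _ <| by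
        linarith [euclNorm_update_le (stepPath s t k) k x, euclNorm_stepPath_le s t k]
    have h := (hf k (stepPath s t k)).abs_sub_le_of_abs_le hR hline
      (a := s k) (b := t k) (by linarith [euclNorm_nonneg t]) (by linarith [euclNorm_nonneg s])
    rw [update_stepPath_apply_self, update_stepPath_eq_stepPath_succ] at h
    exact h.trans (mul_le_mul_of_nonneg_left (abs_apply_le_euclNorm (s - t) k) (by positivity))
  have := dist_le_range_sum_of_dist_le (f := fun k => f (stepPath s t k)) n
    (d := fun _ => 2 * M / R * euclNorm n (s - t)) fun {k} hk => hstep ⟨k, hk⟩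
  simpa [Real.dist_eq, mul_assoc] using this

lemma one_add_rpow_le_mul_rpow {p c r R : ℝ} (hp : 0 ≤ p) (hc : 0 ≤ c) (hr : 0 ≤ r)
    (hrR : r ≤ c * R) (hR : 1 ≤ R) : 1 + r ^ p ≤ (1 + c ^ p) * R ^ p := by
  have h1 : 1 ≤ R ^ p := Real.one_le_rpow hR hp
  have h2 : r ^ p ≤ c ^ p * R ^ p := by
    rw [← Real.mul_rpow hc (by linarith)]
    exact Real.rpow_le_rpow hr hrR hp
  nlinarith [Real.rpow_nonneg hc p]

theorem separately_convex_lipschitz_estimate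
    (n : ℕ) (p : ℝ) (hp : 1 ≤ p) (C : ℝ) (f : (Fin n → ℝ) → ℝ)
    (hconv : SeparatelyConvex n f)
    (hgrowth : ∀ a : Fin n → ℝ, 0 ≤ f a ∧ f a ≤ C * (1 + euclNorm n a ^ p)) :
    ∃ C' : ℝ, ∀ s t : Fin n → ℝ,
      |f s - f t| ≤ C' * (1 + euclNorm n s + euclNorm n t) ^ (p - 1) * euclNorm n (s - t) := by
  have hC : 0 ≤ C := nonneg_of_mul_nonneg_left ((hgrowth 0).1.trans (hgrowth 0).2)
    (by positivity [Real.rpow_nonneg (euclNorm_nonneg (0 : Fin n → ℝ)) p])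
  refine ⟨n * (2 * C * (1 + 3 ^ p)), fun s t => ?_⟩
  set R := 1 + euclNorm n s + euclNorm n t
  have hR : 1 ≤ R := by linarith [euclNorm_nonneg s, euclNorm_nonneg t]
  have hM : ∀ a, euclNorm n a < 3 * R → |f a| ≤ C * (1 + 3 ^ p) * R ^ p := fun a ha => by
    rw [abs_of_nonneg (hgrowth a).1, mul_assoc]
    exact (hgrowth a).2.trans <| mul_le_mul_of_nonneg_left
      (one_add_rpow_le_mul_rpow (by linarith) (by norm_num) (euclNorm_nonneg a) ha.le hR) hC
  have h := hconv.abs_sub_le (by linarith) hM (s := s) (t := t) (by linarith)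
  have hRp : R ^ p / R = R ^ (p - 1) := by rw [Real.rpow_sub_one (by linarith)]
  calc |f s - f t| ≤ n * (2 * (C * (1 + 3 ^ p) * R ^ p) / R) * euclNorm n (s - t) := h
    _ = _ := by rw [← hRp]; ring
end
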